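/- Let n ≥ 3 and let Φ = (φ_1,…,φ_n) be an equiangular tight frame for ℂ^d that is triply covariant (its symmetry group acts 3-transitively on the indices). Then d = 1, or n = d, or n = d + 1. In particular, the only non-trivial triply covariant equiangular tight frames are orthonormal bases and simplices. -/

import Mathlib

open scoped ComplexInnerProductSpace

noncomputable section

/-- `(φ_1, …, φ_n)` is an equiangular tight frame (ETF) for `ℂ^d`. -/
def IsETF (d n : ℕ) (φ : Fin n → EuclideanSpace ℂ (Fin d)) : Prop :=
  (∀ x : EuclideanSpace ℂ (Fin d), x = ((d : ℂ) / (n : ℂ)) • ∑ j, ⟪φ j, x⟫ • φ j) ∧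
  (∀ j, ‖φ j‖ = 1) ∧
  (∃ α : ℝ, 0 ≤ α ∧ ∀ j k, j ≠ k → ‖⟪φ j, φ k⟫‖ = α)

/-- `U` is a symmetry of `φ` with induced permutation `σ`:
`U φ_j φ_j^* U^* = φ_{σ(j)} φ_{σ(j)}^*` for all `j`. -/
def IsSymmetry {d n : ℕ} (φ : Fin n → EuclideanSpace ℂ (Fin d))
    (U : EuclideanSpace ℂ (Fin d) ≃ₗᵢ[ℂ] EuclideanSpace ℂ (Fin d))
    (σ : Equiv.Perm (Fin n)) : Prop :=
  ∀ j x, U (⟪φ j, U.symm x⟫ • φ j) = ⟪φ (σ j), x⟫ • φ (σ j)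

/-- `φ` is triply covariant: the symmetry group acts 3-transitively on the indices. -/
def TriplyCovariant {d n : ℕ} (φ : Fin n → EuclideanSpace ℂ (Fin d)) : Prop :=
  ∀ j k l j' k' l' : Fin n, j ≠ k → j ≠ l → k ≠ l → j' ≠ k' → j' ≠ l' → k' ≠ l' →
    ∃ (U : EuclideanSpace ℂ (Fin d) ≃ₗᵢ[ℂ] EuclideanSpace ℂ (Fin d))
      (σ : Equiv.Perm (Fin n)),
      IsSymmetry φ U σ ∧ σ j = j' ∧ σ k = k' ∧ σ l = l'

/-!
The Gram matrix `G` of the tight frame satisfies `G² = (n/d) G`. Symmetries multiply each `φ_j`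
by a phase, and triple products `⟪φ_a, φ_b⟫⟪φ_b, φ_c⟫⟪φ_c, φ_a⟫` are phase invariant, so triple
covariance makes all triple products over distinct indices equal to one number `T`. The diagonal
entry of `G² = (n/d) G`, and an off-diagonal entry multiplied by its conjugate, give
`1 = (d/n)(1 + (n-1)α²)` and `α² = (d/n)(2α² + (n-2)T)`. Taking absolute values with `|T| = α³`,
either `α = 0` (and `n = d`) or `n²(d-1)(n-1-d) = 0`.
-/

namespace ETF

variable {E : Type*} [NormedAddCommGroup E] [InnerProductSpace ℂ E] {ι : Type*}

def tripleProduct (φ : ι → E) (a b c : ι) : ℂ :=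
  ⟪φ a, φ b⟫ * ⟪φ b, φ c⟫ * ⟪φ c, φ a⟫

lemma inner_mul_inner_swap (x y : E) : ⟪x, y⟫ * ⟪y, x⟫ = (‖⟪x, y⟫‖ : ℂ) ^ 2 := by
  rw [← inner_conj_symm y x]
  exact RCLike.mul_conj (K := ℂ) _

lemma inner_mul_inner_eq_mul_sum_tripleProduct [Fintype ι] {φ : ι → E} {c : ℂ}
    (hframe : ∀ x, x = c • ∑ j, ⟪φ j, x⟫ • φ j) (k l : ι) :
    ⟪φ k, φ l⟫ * ⟪φ l, φ k⟫ = c * ∑ j, tripleProduct φ k l j := by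
  have h := congrArg (fun x => ⟪φ k, φ l⟫ * ⟪φ l, x⟫) (hframe (φ k))
  simp only [inner_smul_right, inner_sum, Finset.mul_sum] at h
  rw [h, Finset.mul_sum]
  congr 1 with j
  simp only [tripleProduct]
  ring

lemma sum_tripleProduct_self [Fintype ι] {φ : ι → E} (hnorm : ∀ j, ‖φ j‖ = 1) {α : ℝ}
    (k : ι) (hα : ∀ j, j ≠ k → ‖⟪φ k, φ j⟫‖ = α) :
    ∑ j, tripleProduct φ k k j = 1 + (Fintype.card ι - 1) * (α : ℂ) ^ 2 := by
  classical
  have hoff : ∀ j, j ≠ k → tripleProduct φ k k j = (α : ℂ) ^ 2 := fun j hj => by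
    rw [tripleProduct, inner_self_eq_one_of_norm_eq_one (hnorm k), one_mul,
      inner_mul_inner_swap, hα j hj]
  have hsum : ∑ j, (tripleProduct φ k k j - (α : ℂ) ^ 2) = 1 - (α : ℂ) ^ 2 := by
    rw [Fintype.sum_eq_single k fun j hj => sub_eq_zero.mpr (hoff j hj), tripleProduct,
      inner_self_eq_one_of_norm_eq_one (hnorm k), one_mul, one_mul]
  rw [Finset.sum_sub_distrib, Finset.sum_const, Finset.card_univ, nsmul_eq_mul] at hsum
  linear_combination hsum

lemma sum_tripleProduct_of_ne [Fintype ι] {φ : ι → E} (hnorm : ∀ j, ‖φ j‖ = 1) {α : ℝ} {T : ℂ}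
    {k l : ι} (hkl : k ≠ l) (hα : ‖⟪φ k, φ l⟫‖ = α)
    (hT : ∀ j, j ≠ k → j ≠ l → tripleProduct φ k l j = T) :
    ∑ j, tripleProduct φ k l j = 2 * (α : ℂ) ^ 2 + (Fintype.card ι - 2) * T := by
  classical
  have hk : tripleProduct φ k l k = (α : ℂ) ^ 2 := by
    rw [tripleProduct, inner_self_eq_one_of_norm_eq_one (hnorm k), mul_one,
      inner_mul_inner_swap, hα]
  have hl : tripleProduct φ k l l = (α : ℂ) ^ 2 := by
    rw [tripleProduct, inner_self_eq_one_of_norm_eq_one (hnorm l), mul_one,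
      inner_mul_inner_swap, hα]
  have hsum : ∑ j, (tripleProduct φ k l j - T) = 2 * ((α : ℂ) ^ 2 - T) := by
    rw [Fintype.sum_eq_add k l hkl fun j hj => sub_eq_zero.mpr (hT j hj.1 hj.2), hk, hl]
    ring
  rw [Finset.sum_sub_distrib, Finset.sum_const, Finset.card_univ, nsmul_eq_mul] at hsum
  linear_combination hsum

lemma tripleProduct_smul {φ : ι → E} {e : ι → ℂ} (he : ∀ j, ‖e j‖ = 1) (a b c : ι) :
    tripleProduct (fun j => e j • φ j) a b c = tripleProduct φ a b c := by
  have hunit : ∀ j, starRingEnd ℂ (e j) * e j = 1 := fun j => by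
    rw [RCLike.conj_mul, he]; simp
  simp only [tripleProduct, inner_smul_left, inner_smul_right]
  linear_combination ⟪φ a, φ b⟫ * ⟪φ b, φ c⟫ * ⟪φ c, φ a⟫ *
    ((starRingEnd ℂ (e b) * e b) * (starRingEnd ℂ (e c) * e c) * hunit a +
      (starRingEnd ℂ (e c) * e c) * hunit b + hunit c)

end ETF

open ETF

variable {d n : ℕ} {φ : Fin n → EuclideanSpace ℂ (Fin d)}
  {U : EuclideanSpace ℂ (Fin d) ≃ₗᵢ[ℂ] EuclideanSpace ℂ (Fin d)} {σ : Equiv.Perm (Fin n)}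

lemma IsSymmetry.apply_eq_smul (hS : IsSymmetry φ U σ) {a : Fin n} (ha : ‖φ a‖ = 1) :
    U (φ a) = ⟪φ (σ a), U (φ a)⟫ • φ (σ a) := by
  simpa [ha] using hS a (U (φ a))

lemma IsSymmetry.tripleProduct_apply (hS : IsSymmetry φ U σ) (hnorm : ∀ j, ‖φ j‖ = 1)
    (a b c : Fin n) :
    tripleProduct φ (σ a) (σ b) (σ c) = tripleProduct φ a b c := by
  obtain ⟨e, hU⟩ : ∃ e : Fin n → ℂ, ∀ j, U (φ j) = e j • φ (σ j) :=
    ⟨_, fun j => hS.apply_eq_smul (hnorm j)⟩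
  have he : ∀ j, ‖e j‖ = 1 := fun j => by
    simpa [hU, norm_smul, hnorm] using U.norm_map (φ j)
  calc tripleProduct φ (σ a) (σ b) (σ c)
      = tripleProduct (fun j => e j • φ (σ j)) a b c :=
        (tripleProduct_smul (φ := fun j => φ (σ j)) he a b c).symm
    _ = tripleProduct (fun j => U (φ j)) a b c := by simp only [hU]
    _ = tripleProduct φ a b c := by
      unfold tripleProduct
      rw [U.inner_map_map, U.inner_map_map, U.inner_map_map]

lemma TriplyCovariant.tripleProduct_eq (hcov : TriplyCovariant φ) (hnorm : ∀ j, ‖φ j‖ = 1)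
    {a b c a' b' c' : Fin n} (hab : a ≠ b) (hac : a ≠ c) (hbc : b ≠ c)
    (hab' : a' ≠ b') (hac' : a' ≠ c') (hbc' : b' ≠ c') :
    tripleProduct φ a' b' c' = tripleProduct φ a b c := by
  obtain ⟨U, σ, hS, rfl, rfl, rfl⟩ := hcov a b c a' b' c' hab hac hbc hab' hac' hbc'
  exact hS.tripleProduct_apply hnorm a b c

lemma eq_one_or_eq_or_eq_add_one_of_frame_equations {N D α : ℝ} {T : ℂ} (hN : N ≠ 0)
    (hT : ‖T‖ = α ^ 3) (hdiag : (1 : ℂ) = D / N * (1 + (N - 1) * α ^ 2))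
    (hoff : (α : ℂ) ^ 2 = D / N * (2 * α ^ 2 + (N - 2) * T)) :
    D = 1 ∨ N = D ∨ N = D + 1 := by
  have hN' : (N : ℂ) ≠ 0 := by exact_mod_cast hN
  have h1 : N = D * (1 + (N - 1) * α ^ 2) := by
    field_simp at hdiag
    exact_mod_cast hdiag
  have h2 : ((D * (N - 2) : ℝ) : ℂ) * T = ((N - 2 * D : ℝ) : ℂ) * (α : ℂ) ^ 2 := by
    push_cast
    field_simp at hoff
    linear_combination -hoff
  have h3 := congrArg (‖·‖ ^ 2) h2
  simp only [norm_mul, norm_pow, Complex.norm_real, Real.norm_eq_abs, mul_pow, sq_abs, hT] at h3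
  rcases eq_or_ne α 0 with rfl | hα
  · right; left; simpa using h1
  have key : (D * (N - 2)) ^ 2 * α ^ 2 = (N - 2 * D) ^ 2 :=
    mul_right_cancel₀ (pow_ne_zero 4 hα) (by linear_combination h3)
  have : N ^ 2 * ((D - 1) * (N - 1 - D)) = 0 := by
    linear_combination (N - 1) * key + D * (N - 2) ^ 2 * h1
  rcases mul_eq_zero.mp ((mul_eq_zero.mp this).resolve_left (pow_ne_zero 2 hN)) with h | h
  · left; linarith
  · right; right; linarith

theorem triply_covariant_etf {d n : ℕ} (hn : 3 ≤ n)
    (φ : Fin n → EuclideanSpace ℂ (Fin d))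
    (hETF : IsETF d n φ) (hcov : TriplyCovariant φ) :
    d = 1 ∨ n = d ∨ n = d + 1 := by
  obtain ⟨hframe, hnorm, α, -, hα⟩ := hETF
  let j₀ : Fin n := ⟨0, by omega⟩
  let j₁ : Fin n := ⟨1, by omega⟩
  let j₂ : Fin n := ⟨2, by omega⟩
  have h01 : j₀ ≠ j₁ := by simp [j₀, j₁, Fin.ext_iff]
  have h02 : j₀ ≠ j₂ := by simp [j₀, j₂, Fin.ext_iff]
  have h12 : j₁ ≠ j₂ := by simp [j₁, j₂, Fin.ext_iff]
  have hdiag := inner_mul_inner_eq_mul_sum_tripleProduct hframe j₀ j₀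
  rw [sum_tripleProduct_self hnorm j₀ fun j hj => hα j₀ j hj.symm,
    inner_self_eq_one_of_norm_eq_one (hnorm j₀), one_mul, Fintype.card_fin] at hdiag
  have hoff := inner_mul_inner_eq_mul_sum_tripleProduct hframe j₀ j₁
  rw [sum_tripleProduct_of_ne hnorm h01 (hα j₀ j₁ h01)
      fun j hj₀ hj₁ => hcov.tripleProduct_eq hnorm h01 h02 h12 h01 hj₀.symm hj₁.symm,
    inner_mul_inner_swap, hα j₀ j₁ h01, Fintype.card_fin] at hoff
  have hT : ‖tripleProduct φ j₀ j₁ j₂‖ = α ^ 3 := by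
    rw [tripleProduct, norm_mul, norm_mul, hα _ _ h01, hα _ _ h12, hα _ _ h02.symm]
    ring
  have := eq_one_or_eq_or_eq_add_one_of_frame_equations (N := n) (D := d)
    (by positivity) hT (by push_cast; exact hdiag) (by push_cast; exact hoff)
  exact_mod_cast this
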